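/- arXiv:1712.07811 — 2 statements merged into one kernel-verified Lean document; each statement's English description precedes it below -/
import Mathlib

section
/- For a zero-mean random 2-D graph signal x on G1 □ G2 with 2-D GFT spectrum x̂, the following are equivalent: (1) for all i2, j2, the matrix Cov(x(·,i2), x(·,j2)) is simultaneously diagonalizable with L1 (by the eigenvector matrix U1), and for all i1, j1, Cov(x(i1,·), x(j1,·)) is simultaneously diagonalizable with L2; (2) Cov(x̂(λ_{k1}^(1), λ_{k2}^(2)), x̂(λ_{l1}^(1), λ_{l2}^(2))) = 0 unless k1 = l1 and k2 = l2; (3) the N1N2 × N1N2 covariance matrix Cov(x) is simultaneously diagonalizable with the Kronecker sum L1 ⊕ L2. -/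
open Matrix Kronecker MeasureTheory

/-- `A` is diagonalized by the unitary matrix `U` (so it is simultaneously
diagonalizable with any matrix having eigenvector matrix `U`). -/
def DiagBy {N : ℕ} (U A : Matrix (Fin N) (Fin N) ℂ) : Prop :=
  ∃ d : Fin N → ℂ, A = U * Matrix.diagonal d * Uᴴ

section FGWAux
variable {m : Type*} [Fintype m] [DecidableEq m]

lemma fgw_sandwich {U A : Matrix m m ℂ} {d : m → ℂ} (hU : Uᴴ * U = 1)
    (h : A = U * Matrix.diagonal d * Uᴴ) : Uᴴ * A * U = Matrix.diagonal d := by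
  subst h
  have h2 : Uᴴ * (U * Matrix.diagonal d * Uᴴ) * U
      = Uᴴ * U * Matrix.diagonal d * (Uᴴ * U) := by
    simp only [Matrix.mul_assoc]
  rw [h2, hU, Matrix.one_mul, Matrix.mul_one]

lemma fgw_diagBy_iff {U : Matrix m m ℂ} (hU : Uᴴ * U = 1) (hU' : U * Uᴴ = 1)
    (A : Matrix m m ℂ) :
    (∃ d : m → ℂ, A = U * Matrix.diagonal d * Uᴴ) ↔
      ∀ k l, k ≠ l → (Uᴴ * A * U) k l = 0 := by
  constructor
  · rintro ⟨d, rfl⟩ k l hkl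
    rw [fgw_sandwich hU rfl, Matrix.diagonal_apply_ne _ hkl]
  · intro h
    refine ⟨fun k => (Uᴴ * A * U) k k, ?_⟩
    have hM : Uᴴ * A * U = Matrix.diagonal (fun k => (Uᴴ * A * U) k k) := by
      ext k l
      by_cases hkl : k = l
      · subst hkl; simp
      · rw [h k l hkl, Matrix.diagonal_apply_ne _ hkl]
    calc A = (U * Uᴴ) * A * (U * Uᴴ) := by rw [hU', Matrix.one_mul, Matrix.mul_one]
    _ = U * (Uᴴ * A * U) * Uᴴ := by simp only [Matrix.mul_assoc]
    _ = U * Matrix.diagonal (fun k => (Uᴴ * A * U) k k) * Uᴴ := by rw [← hM]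

end FGWAux

theorem fgw_key (N1 N2 : ℕ)
    {Ω : Type*} [MeasurableSpace Ω] (μ : Measure Ω)
    (U1 : Matrix (Fin N1) (Fin N1) ℂ) (U2 : Matrix (Fin N2) (Fin N2) ℂ)
    (hU1 : U1 ∈ Matrix.unitaryGroup (Fin N1) ℂ)
    (hU2 : U2 ∈ Matrix.unitaryGroup (Fin N2) ℂ)
    (x : Fin N1 → Fin N2 → Ω → ℝ)
    (hint : ∀ i1 i2 j1 j2, Integrable (fun ω => x i1 i2 ω * x j1 j2 ω) μ) :
    (((∀ i2 j2, DiagBy U1 (Matrix.of fun i1 j1 =>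
          ((∫ ω, x i1 i2 ω * x j1 j2 ω ∂μ : ℝ) : ℂ))) ∧
      (∀ i1 j1, DiagBy U2 (Matrix.of fun i2 j2 =>
          ((∫ ω, x i1 i2 ω * x j1 j2 ω ∂μ : ℝ) : ℂ)))) ↔
     (∀ (k1 : Fin N1) (k2 : Fin N2) (l1 : Fin N1) (l2 : Fin N2), (k1, k2) ≠ (l1, l2) →
      (∫ ω, (∑ i1, ∑ i2, (x i1 i2 ω : ℂ) * (starRingEnd ℂ) (U1 i1 k1) * (starRingEnd ℂ) (U2 i2 k2)) *
        (starRingEnd ℂ) (∑ i1, ∑ i2, (x i1 i2 ω : ℂ) * (starRingEnd ℂ) (U1 i1 l1) * (starRingEnd ℂ) (U2 i2 l2)) ∂μ) = 0)) ∧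
    ((∀ (k1 : Fin N1) (k2 : Fin N2) (l1 : Fin N1) (l2 : Fin N2), (k1, k2) ≠ (l1, l2) →
      (∫ ω, (∑ i1, ∑ i2, (x i1 i2 ω : ℂ) * (starRingEnd ℂ) (U1 i1 k1) * (starRingEnd ℂ) (U2 i2 k2)) *
        (starRingEnd ℂ) (∑ i1, ∑ i2, (x i1 i2 ω : ℂ) * (starRingEnd ℂ) (U1 i1 l1) * (starRingEnd ℂ) (U2 i2 l2)) ∂μ) = 0) ↔
     (∃ d : Fin N1 × Fin N2 → ℂ,
      (Matrix.of fun p q : Fin N1 × Fin N2 => ((∫ ω, x p.1 p.2 ω * x q.1 q.2 ω ∂μ : ℝ) : ℂ))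
        = (U1 ⊗ₖ U2) * Matrix.diagonal d * (U1 ⊗ₖ U2)ᴴ)) := by
  classical
  have h1a : U1ᴴ * U1 = 1 := by
    have := hU1.1; rwa [Matrix.star_eq_conjTranspose] at this
  have h1b : U1 * U1ᴴ = 1 := by
    have := hU1.2; rwa [Matrix.star_eq_conjTranspose] at this
  have h2a : U2ᴴ * U2 = 1 := by
    have := hU2.1; rwa [Matrix.star_eq_conjTranspose] at this
  have h2b : U2 * U2ᴴ = 1 := by
    have := hU2.2; rwa [Matrix.star_eq_conjTranspose] at this
  have hKH : (U1 ⊗ₖ U2)ᴴ = U1ᴴ ⊗ₖ U2ᴴ := by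
    ext p q; simp [conjTranspose_apply, mul_comm]
  have hUa : (U1 ⊗ₖ U2)ᴴ * (U1 ⊗ₖ U2) = 1 := by
    rw [hKH, ← Matrix.mul_kronecker_mul, h1a, h2a, Matrix.one_kronecker_one]
  have hUb : (U1 ⊗ₖ U2) * (U1 ⊗ₖ U2)ᴴ = 1 := by
    rw [hKH, ← Matrix.mul_kronecker_mul, h1b, h2b, Matrix.one_kronecker_one]
  set CM : Matrix (Fin N1 × Fin N2) (Fin N1 × Fin N2) ℂ :=
    Matrix.of fun p q : Fin N1 × Fin N2 =>
      ((∫ ω, x p.1 p.2 ω * x q.1 q.2 ω ∂μ : ℝ) : ℂ) with hCM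
  -- expansion of the transformed covariance matrix, i-outer order
  have Echat : ∀ (k1 l1 : Fin N1) (k2 l2 : Fin N2),
      ((U1 ⊗ₖ U2)ᴴ * CM * (U1 ⊗ₖ U2)) (k1, k2) (l1, l2)
        = ∑ i1, ∑ i2, ∑ j1, ∑ j2,
            (starRingEnd ℂ) (U1 i1 k1) * (starRingEnd ℂ) (U2 i2 k2) *
              ((∫ ω, x i1 i2 ω * x j1 j2 ω ∂μ : ℝ) : ℂ) * U1 j1 l1 * U2 j2 l2 := by
    intro k1 l1 k2 l2
    rw [Matrix.mul_assoc]
    simp only [hCM, Matrix.mul_apply, Matrix.conjTranspose_apply,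
      Matrix.kroneckerMap_apply, Matrix.of_apply, Finset.mul_sum, Finset.sum_mul,
      Fintype.sum_prod_type, star_mul', starRingEnd_apply]
    refine Finset.sum_congr rfl fun i1 _ => Finset.sum_congr rfl fun i2 _ =>
      Finset.sum_congr rfl fun j1 _ => Finset.sum_congr rfl fun j2 _ => by ring
  have Ecol : ∀ (i2 j2 : Fin N2) (k1 l1 : Fin N1),
      (U1ᴴ * (Matrix.of fun i1 j1 => ((∫ ω, x i1 i2 ω * x j1 j2 ω ∂μ : ℝ) : ℂ)) * U1) k1 l1
        = ∑ i1, ∑ j1, (starRingEnd ℂ) (U1 i1 k1) *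
            ((∫ ω, x i1 i2 ω * x j1 j2 ω ∂μ : ℝ) : ℂ) * U1 j1 l1 := by
    intro i2 j2 k1 l1
    rw [Matrix.mul_assoc]
    simp only [Matrix.mul_apply, Matrix.conjTranspose_apply, Matrix.of_apply,
      Finset.mul_sum, starRingEnd_apply, mul_assoc]
  have Erow : ∀ (i1 j1 : Fin N1) (k2 l2 : Fin N2),
      (U2ᴴ * (Matrix.of fun i2 j2 => ((∫ ω, x i1 i2 ω * x j1 j2 ω ∂μ : ℝ) : ℂ)) * U2) k2 l2
        = ∑ i2, ∑ j2, (starRingEnd ℂ) (U2 i2 k2) *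
            ((∫ ω, x i1 i2 ω * x j1 j2 ω ∂μ : ℝ) : ℂ) * U2 j2 l2 := by
    intro i1 j1 k2 l2
    rw [Matrix.mul_assoc]
    simp only [Matrix.mul_apply, Matrix.conjTranspose_apply, Matrix.of_apply,
      Finset.mul_sum, starRingEnd_apply, mul_assoc]
  -- the spectral covariance equals an entry of the transformed covariance matrix
  have Fspec : ∀ (k1 l1 : Fin N1) (k2 l2 : Fin N2),
      (∫ ω, (∑ i1, ∑ i2, (x i1 i2 ω : ℂ) * (starRingEnd ℂ) (U1 i1 k1) * (starRingEnd ℂ) (U2 i2 k2)) *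
        (starRingEnd ℂ) (∑ i1, ∑ i2, (x i1 i2 ω : ℂ) * (starRingEnd ℂ) (U1 i1 l1) * (starRingEnd ℂ) (U2 i2 l2)) ∂μ)
      = ((U1 ⊗ₖ U2)ᴴ * CM * (U1 ⊗ₖ U2)) (k1, k2) (l1, l2) := by
    intro k1 l1 k2 l2
    rw [Echat k1 l1 k2 l2]
    have hconj : ∀ ω, (starRingEnd ℂ)
        (∑ i1, ∑ i2, (x i1 i2 ω : ℂ) * (starRingEnd ℂ) (U1 i1 l1) * (starRingEnd ℂ) (U2 i2 l2))
        = ∑ j1, ∑ j2, (x j1 j2 ω : ℂ) * U1 j1 l1 * U2 j2 l2 := by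
      intro ω
      simp only [map_sum, _root_.map_mul, Complex.conj_ofReal, Complex.conj_conj]
    have hpt : ∀ ω,
        (∑ i1, ∑ i2, (x i1 i2 ω : ℂ) * (starRingEnd ℂ) (U1 i1 k1) * (starRingEnd ℂ) (U2 i2 k2)) *
          (starRingEnd ℂ) (∑ i1, ∑ i2, (x i1 i2 ω : ℂ) * (starRingEnd ℂ) (U1 i1 l1) * (starRingEnd ℂ) (U2 i2 l2))
        = ∑ p : (Fin N1 × Fin N2) × (Fin N1 × Fin N2),
            ((x p.2.1 p.2.2 ω * x p.1.1 p.1.2 ω : ℝ) : ℂ) *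
              ((starRingEnd ℂ) (U1 p.2.1 k1) * (starRingEnd ℂ) (U2 p.2.2 k2) * U1 p.1.1 l1 * U2 p.1.2 l2) := by
      intro ω
      rw [hconj]
      simp only [Finset.sum_mul, Finset.mul_sum, Fintype.sum_prod_type]
      refine Finset.sum_congr rfl fun i1 _ => Finset.sum_congr rfl fun i2 _ =>
        Finset.sum_congr rfl fun j1 _ => Finset.sum_congr rfl fun j2 _ => ?_
      push_cast
      ring
    calc (∫ ω, (∑ i1, ∑ i2, (x i1 i2 ω : ℂ) * (starRingEnd ℂ) (U1 i1 k1) * (starRingEnd ℂ) (U2 i2 k2)) *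
        (starRingEnd ℂ) (∑ i1, ∑ i2, (x i1 i2 ω : ℂ) * (starRingEnd ℂ) (U1 i1 l1) * (starRingEnd ℂ) (U2 i2 l2)) ∂μ)
        = ∫ ω, ∑ p : (Fin N1 × Fin N2) × (Fin N1 × Fin N2),
            ((x p.2.1 p.2.2 ω * x p.1.1 p.1.2 ω : ℝ) : ℂ) *
              ((starRingEnd ℂ) (U1 p.2.1 k1) * (starRingEnd ℂ) (U2 p.2.2 k2) * U1 p.1.1 l1 * U2 p.1.2 l2) ∂μ := by
          simp only [hpt]
      _ = ∑ p : (Fin N1 × Fin N2) × (Fin N1 × Fin N2),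
            ∫ ω, ((x p.2.1 p.2.2 ω * x p.1.1 p.1.2 ω : ℝ) : ℂ) *
              ((starRingEnd ℂ) (U1 p.2.1 k1) * (starRingEnd ℂ) (U2 p.2.2 k2) * U1 p.1.1 l1 * U2 p.1.2 l2) ∂μ := by
          refine integral_finset_sum _ fun p _ => ?_
          exact ((hint p.2.1 p.2.2 p.1.1 p.1.2).ofReal).mul_const _
      _ = ∑ p : (Fin N1 × Fin N2) × (Fin N1 × Fin N2),
            ((∫ ω, x p.2.1 p.2.2 ω * x p.1.1 p.1.2 ω ∂μ : ℝ) : ℂ) *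
              ((starRingEnd ℂ) (U1 p.2.1 k1) * (starRingEnd ℂ) (U2 p.2.2 k2) * U1 p.1.1 l1 * U2 p.1.2 l2) := by
          refine Finset.sum_congr rfl fun p _ => ?_
          rw [integral_mul_const]
          congr 1
          exact integral_ofReal
      _ = ∑ i1, ∑ i2, ∑ j1, ∑ j2,
          (starRingEnd ℂ) (U1 i1 k1) * (starRingEnd ℂ) (U2 i2 k2) *
            ((∫ ω, x i1 i2 ω * x j1 j2 ω ∂μ : ℝ) : ℂ) * U1 j1 l1 * U2 j2 l2 := by
          rw [Fintype.sum_prod_type, Finset.sum_comm]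
          simp only [Fintype.sum_prod_type]
          refine Finset.sum_congr rfl fun i1 _ => Finset.sum_congr rfl fun i2 _ =>
            Finset.sum_congr rfl fun j1 _ => Finset.sum_congr rfl fun j2 _ => by ring
  -- condition (1) implies off-diagonal vanishing of the transformed covariance
  have hC1P : ((∀ i2 j2, DiagBy U1 (Matrix.of fun i1 j1 =>
          ((∫ ω, x i1 i2 ω * x j1 j2 ω ∂μ : ℝ) : ℂ))) ∧
      (∀ i1 j1, DiagBy U2 (Matrix.of fun i2 j2 =>
          ((∫ ω, x i1 i2 ω * x j1 j2 ω ∂μ : ℝ) : ℂ)))) →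
      ∀ k l : Fin N1 × Fin N2, k ≠ l →
        ((U1 ⊗ₖ U2)ᴴ * CM * (U1 ⊗ₖ U2)) k l = 0 := by
    rintro ⟨hcol, hrow⟩ ⟨k1, k2⟩ ⟨l1, l2⟩ hne
    have hne' : k1 ≠ l1 ∨ k2 ≠ l2 := by
      by_contra hcon
      push_neg at hcon
      exact hne (by rw [hcon.1, hcon.2])
    rcases hne' with h1 | h2
    · -- use the column condition
      have hz : ∀ i2 j2 : Fin N2,
          (U1ᴴ * (Matrix.of fun i1 j1 => ((∫ ω, x i1 i2 ω * x j1 j2 ω ∂μ : ℝ) : ℂ)) * U1) k1 l1 = 0 := by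
        intro i2 j2
        obtain ⟨d, hd⟩ := hcol i2 j2
        rw [fgw_sandwich h1a hd, Matrix.diagonal_apply_ne _ h1]
      rw [Echat]
      calc ∑ i1, ∑ i2, ∑ j1, ∑ j2,
            (starRingEnd ℂ) (U1 i1 k1) * (starRingEnd ℂ) (U2 i2 k2) *
              ((∫ ω, x i1 i2 ω * x j1 j2 ω ∂μ : ℝ) : ℂ) * U1 j1 l1 * U2 j2 l2
          = ∑ i2, ∑ i1, ∑ j1, ∑ j2,
            (starRingEnd ℂ) (U1 i1 k1) * (starRingEnd ℂ) (U2 i2 k2) *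
              ((∫ ω, x i1 i2 ω * x j1 j2 ω ∂μ : ℝ) : ℂ) * U1 j1 l1 * U2 j2 l2 := Finset.sum_comm
        _ = ∑ i2, ∑ i1, ∑ j2, ∑ j1,
            (starRingEnd ℂ) (U1 i1 k1) * (starRingEnd ℂ) (U2 i2 k2) *
              ((∫ ω, x i1 i2 ω * x j1 j2 ω ∂μ : ℝ) : ℂ) * U1 j1 l1 * U2 j2 l2 :=
            Finset.sum_congr rfl fun i2 _ => Finset.sum_congr rfl fun i1 _ => Finset.sum_comm
        _ = ∑ i2, ∑ j2, ∑ i1, ∑ j1,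
            (starRingEnd ℂ) (U1 i1 k1) * (starRingEnd ℂ) (U2 i2 k2) *
              ((∫ ω, x i1 i2 ω * x j1 j2 ω ∂μ : ℝ) : ℂ) * U1 j1 l1 * U2 j2 l2 :=
            Finset.sum_congr rfl fun i2 _ => Finset.sum_comm
        _ = 0 := by
            refine Finset.sum_eq_zero fun i2 _ => Finset.sum_eq_zero fun j2 _ => ?_
            calc ∑ i1, ∑ j1,
                  (starRingEnd ℂ) (U1 i1 k1) * (starRingEnd ℂ) (U2 i2 k2) *
                    ((∫ ω, x i1 i2 ω * x j1 j2 ω ∂μ : ℝ) : ℂ) * U1 j1 l1 * U2 j2 l2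
                = ((starRingEnd ℂ) (U2 i2 k2) * U2 j2 l2) * ∑ i1, ∑ j1,
                    (starRingEnd ℂ) (U1 i1 k1) *
                      ((∫ ω, x i1 i2 ω * x j1 j2 ω ∂μ : ℝ) : ℂ) * U1 j1 l1 := by
                  rw [Finset.mul_sum]
                  refine Finset.sum_congr rfl fun i1 _ => ?_
                  rw [Finset.mul_sum]
                  refine Finset.sum_congr rfl fun j1 _ => by ring
              _ = 0 := by rw [← Ecol, hz, mul_zero]
    · -- use the row condition
      have hz : ∀ i1 j1 : Fin N1,
          (U2ᴴ * (Matrix.of fun i2 j2 => ((∫ ω, x i1 i2 ω * x j1 j2 ω ∂μ : ℝ) : ℂ)) * U2) k2 l2 = 0 := by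
        intro i1 j1
        obtain ⟨d, hd⟩ := hrow i1 j1
        rw [fgw_sandwich h2a hd, Matrix.diagonal_apply_ne _ h2]
      rw [Echat]
      calc ∑ i1, ∑ i2, ∑ j1, ∑ j2,
            (starRingEnd ℂ) (U1 i1 k1) * (starRingEnd ℂ) (U2 i2 k2) *
              ((∫ ω, x i1 i2 ω * x j1 j2 ω ∂μ : ℝ) : ℂ) * U1 j1 l1 * U2 j2 l2
          = ∑ i1, ∑ j1, ∑ i2, ∑ j2,
            (starRingEnd ℂ) (U1 i1 k1) * (starRingEnd ℂ) (U2 i2 k2) *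
              ((∫ ω, x i1 i2 ω * x j1 j2 ω ∂μ : ℝ) : ℂ) * U1 j1 l1 * U2 j2 l2 :=
            Finset.sum_congr rfl fun i1 _ => Finset.sum_comm
        _ = 0 := by
            refine Finset.sum_eq_zero fun i1 _ => Finset.sum_eq_zero fun j1 _ => ?_
            calc ∑ i2, ∑ j2,
                  (starRingEnd ℂ) (U1 i1 k1) * (starRingEnd ℂ) (U2 i2 k2) *
                    ((∫ ω, x i1 i2 ω * x j1 j2 ω ∂μ : ℝ) : ℂ) * U1 j1 l1 * U2 j2 l2
                = ((starRingEnd ℂ) (U1 i1 k1) * U1 j1 l1) * ∑ i2, ∑ j2,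
                    (starRingEnd ℂ) (U2 i2 k2) *
                      ((∫ ω, x i1 i2 ω * x j1 j2 ω ∂μ : ℝ) : ℂ) * U2 j2 l2 := by
                  rw [Finset.mul_sum]
                  refine Finset.sum_congr rfl fun i2 _ => ?_
                  rw [Finset.mul_sum]
                  refine Finset.sum_congr rfl fun j2 _ => by ring
              _ = 0 := by rw [← Erow, hz, mul_zero]
  -- condition (3) implies condition (1)
  have hC3C1 : (∃ d : Fin N1 × Fin N2 → ℂ,
      CM = (U1 ⊗ₖ U2) * Matrix.diagonal d * (U1 ⊗ₖ U2)ᴴ) →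
      ((∀ i2 j2, DiagBy U1 (Matrix.of fun i1 j1 =>
          ((∫ ω, x i1 i2 ω * x j1 j2 ω ∂μ : ℝ) : ℂ))) ∧
      (∀ i1 j1, DiagBy U2 (Matrix.of fun i2 j2 =>
          ((∫ ω, x i1 i2 ω * x j1 j2 ω ∂μ : ℝ) : ℂ)))) := by
    rintro ⟨d, hd⟩
    have hCd : ∀ (i1 j1 : Fin N1) (i2 j2 : Fin N2),
        ((∫ ω, x i1 i2 ω * x j1 j2 ω ∂μ : ℝ) : ℂ)
          = ∑ m1, ∑ m2, U1 i1 m1 * U2 i2 m2 * d (m1, m2) *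
              ((starRingEnd ℂ) (U1 j1 m1) * (starRingEnd ℂ) (U2 j2 m2)) := by
      intro i1 j1 i2 j2
      have h := congrFun (congrFun hd (i1, i2)) (j1, j2)
      simp only [hCM, Matrix.of_apply] at h
      rw [h, Matrix.mul_apply]
      simp only [Matrix.mul_diagonal, Matrix.conjTranspose_apply,
        Matrix.kroneckerMap_apply, Fintype.sum_prod_type, star_mul', starRingEnd_apply]
    constructor
    · intro i2 j2
      refine ⟨fun k1 => ∑ k2, d (k1, k2) * (U2 i2 k2 * (starRingEnd ℂ) (U2 j2 k2)), ?_⟩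
      ext i1 j1
      simp only [Matrix.of_apply]
      rw [Matrix.mul_apply]
      simp only [Matrix.mul_diagonal, Matrix.conjTranspose_apply, starRingEnd_apply]
      rw [hCd i1 j1 i2 j2]
      simp only [Finset.sum_mul, Finset.mul_sum]
      refine Finset.sum_congr rfl fun m1 _ => Finset.sum_congr rfl fun m2 _ => by
        simp only [starRingEnd_apply]; ring
    · intro i1 j1
      refine ⟨fun k2 => ∑ k1, d (k1, k2) * (U1 i1 k1 * (starRingEnd ℂ) (U1 j1 k1)), ?_⟩
      ext i2 j2
      simp only [Matrix.of_apply]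
      rw [Matrix.mul_apply]
      simp only [Matrix.mul_diagonal, Matrix.conjTranspose_apply, starRingEnd_apply]
      rw [hCd i1 j1 i2 j2, Finset.sum_comm]
      simp only [Finset.sum_mul, Finset.mul_sum]
      refine Finset.sum_congr rfl fun m2 _ => Finset.sum_congr rfl fun m1 _ => by
        simp only [starRingEnd_apply]; ring
  -- condition (2) is equivalent to off-diagonal vanishing
  have hC2P : (∀ (k1 : Fin N1) (k2 : Fin N2) (l1 : Fin N1) (l2 : Fin N2), (k1, k2) ≠ (l1, l2) →
      (∫ ω, (∑ i1, ∑ i2, (x i1 i2 ω : ℂ) * (starRingEnd ℂ) (U1 i1 k1) * (starRingEnd ℂ) (U2 i2 k2)) *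
        (starRingEnd ℂ) (∑ i1, ∑ i2, (x i1 i2 ω : ℂ) * (starRingEnd ℂ) (U1 i1 l1) * (starRingEnd ℂ) (U2 i2 l2)) ∂μ) = 0)
      ↔ ∀ k l : Fin N1 × Fin N2, k ≠ l →
        ((U1 ⊗ₖ U2)ᴴ * CM * (U1 ⊗ₖ U2)) k l = 0 := by
    constructor
    · rintro h ⟨k1, k2⟩ ⟨l1, l2⟩ hne
      rw [← Fspec]
      exact h k1 k2 l1 l2 hne
    · intro h k1 k2 l1 l2 hne
      rw [Fspec]
      exact h (k1, k2) (l1, l2) hne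
  have hPC3 : (∀ k l : Fin N1 × Fin N2, k ≠ l →
      ((U1 ⊗ₖ U2)ᴴ * CM * (U1 ⊗ₖ U2)) k l = 0) ↔
      (∃ d : Fin N1 × Fin N2 → ℂ,
        CM = (U1 ⊗ₖ U2) * Matrix.diagonal d * (U1 ⊗ₖ U2)ᴴ) :=
    (fgw_diagBy_iff hUa hUb CM).symm
  refine ⟨⟨fun h => hC2P.mpr (hC1P h), fun h => hC3C1 (hPC3.mp (hC2P.mp h))⟩,
    hC2P.trans hPC3⟩

/-- Theorem 1 of the paper: for a zero-mean random 2-D graph signal `x` on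
`G1 □ G2` with 2-D GFT spectrum `x̂ = U1ᴴ X conj(U2)`, the following are
equivalent: (1) all column-pair covariance matrices are diagonalized by `U1`
and all row-pair covariance matrices are diagonalized by `U2`; (2) distinct
2-D spectral components are uncorrelated; (3) the full covariance matrix is
simultaneously diagonalizable with the Kronecker sum `L1 ⊕ L2` (i.e. it is
diagonalized by `U1 ⊗ₖ U2`). -/
theorem fgwise_simdiag_iff_spectral_uncorrelated (N1 N2 : ℕ)
    {Ω : Type*} [MeasurableSpace Ω] (μ : Measure Ω) [IsProbabilityMeasure μ]
    (U1 : Matrix (Fin N1) (Fin N1) ℂ) (U2 : Matrix (Fin N2) (Fin N2) ℂ)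
    (hU1 : U1 ∈ Matrix.unitaryGroup (Fin N1) ℂ)
    (hU2 : U2 ∈ Matrix.unitaryGroup (Fin N2) ℂ)
    (lam1 : Fin N1 → ℝ) (lam2 : Fin N2 → ℝ)
    (L1 : Matrix (Fin N1) (Fin N1) ℂ) (L2 : Matrix (Fin N2) (Fin N2) ℂ)
    (hL1 : L1 = U1 * Matrix.diagonal (fun k => (lam1 k : ℂ)) * U1ᴴ)
    (hL2 : L2 = U2 * Matrix.diagonal (fun k => (lam2 k : ℂ)) * U2ᴴ)
    (x : Fin N1 → Fin N2 → Ω → ℝ)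
    (hmeas : ∀ i1 i2, Measurable (x i1 i2))
    (hzero : ∀ i1 i2, ∫ ω, x i1 i2 ω ∂μ = 0)
    (hint : ∀ i1 i2 j1 j2,
      Integrable (fun ω => x i1 i2 ω * x j1 j2 ω) μ) :
    -- the covariance of the (i1,i2) and (j1,j2) samples
    let Cov : Fin N1 → Fin N2 → Fin N1 → Fin N2 → ℝ :=
      fun i1 i2 j1 j2 => ∫ ω, x i1 i2 ω * x j1 j2 ω ∂μ
    -- the 2-D GFT spectrum of x
    let xhat : Fin N1 → Fin N2 → Ω → ℂ :=
      fun k1 k2 ω => ∑ i1, ∑ i2,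
        (x i1 i2 ω : ℂ) * (starRingEnd ℂ) (U1 i1 k1) * (starRingEnd ℂ) (U2 i2 k2)
    -- condition (1)
    let C1 : Prop :=
      (∀ i2 j2, DiagBy U1 (Matrix.of fun i1 j1 => (Cov i1 i2 j1 j2 : ℂ))) ∧
      (∀ i1 j1, DiagBy U2 (Matrix.of fun i2 j2 => (Cov i1 i2 j1 j2 : ℂ)))
    -- condition (2)
    let C2 : Prop := ∀ k1 k2 l1 l2, (k1, k2) ≠ (l1, l2) →
      (∫ ω, xhat k1 k2 ω * (starRingEnd ℂ) (xhat l1 l2 ω) ∂μ) = 0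
    -- condition (3)
    let C3 : Prop := ∃ d : Fin N1 × Fin N2 → ℂ,
      (Matrix.of fun p q : Fin N1 × Fin N2 => (Cov p.1 p.2 q.1 q.2 : ℂ))
        = (U1 ⊗ₖ U2) * Matrix.diagonal d * (U1 ⊗ₖ U2)ᴴ
    (C1 ↔ C2) ∧ (C2 ↔ C3) := by
  intro Cov xhat C1 C2 C3
  exact fgw_key N1 N2 μ U1 U2 hU1 hU2 x hint
end

section
/- For a zero-mean random signal x on G1 □ G2, the matrices Cov(x(·,i2), x(·,j2)) and L1 are simultaneously diagonalizable (by U1) for all i2, j2 if and only if the 2-D spectral components satisfy Cov(x̂(λ_{k1}^(1), λ_{k2}^(2)), x̂(λ_{l1}^(1), λ_{l2}^(2))) = 0 whenever k1 ≠ l1. -/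
open Matrix MeasureTheory

/-!
Since `x̂ = U1ᴴ X conj U2` is linear in `x`, the spectral correlation
`E[x̂(k1,k2) conj x̂(l1,l2)]` is the `(k2,l2)` entry of `U2ᴴ M U2`, where `M` collects the
`(k1,l1)` entries of the rotated column covariances `U1ᴴ C(i2,j2) U1`. Conjugation by the unitary
`U2` is injective, so the correlations with `k1 ≠ l1` all vanish iff every `U1ᴴ C(i2,j2) U1` is
diagonal, i.e. iff `U1` diagonalizes every `C(i2,j2)`.
-/

open ComplexConjugate

theorem star_mul_mul_eq_iff_eq_mul_mul_star {R : Type*} [Monoid R] [StarMul R] {U : R}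
    (hU : U ∈ unitary R) {A D : R} : star U * A * U = D ↔ A = U * D * star U := by
  have h₁ : ∀ X, U * (star U * X) = X := fun X => by
    rw [← mul_assoc, Unitary.mul_star_self_of_mem hU, one_mul]
  have h₂ : ∀ X, star U * (U * X) = X := fun X => by
    rw [← mul_assoc, Unitary.star_mul_self_of_mem hU, one_mul]
  constructor <;> rintro rfl <;>
    simp [mul_assoc, h₁, h₂, Unitary.mul_star_self_of_mem hU, Unitary.star_mul_self_of_mem hU]

theorem Matrix.conjTranspose_mul_mul_eq_zero_iff {n α : Type*} [Fintype n] [DecidableEq n]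
    [CommRing α] [StarRing α] {U : Matrix n n α} (hU : U ∈ unitaryGroup n α)
    {M : Matrix n n α} : Uᴴ * M * U = 0 ↔ M = 0 := by
  rw [← star_eq_conjTranspose]
  simpa using star_mul_mul_eq_iff_eq_mul_mul_star hU (A := M) (D := 0)

theorem diagBy_iff_isDiag {N : ℕ} {U : Matrix (Fin N) (Fin N) ℂ}
    (hU : U ∈ unitaryGroup (Fin N) ℂ) (A : Matrix (Fin N) (Fin N) ℂ) :
    DiagBy U A ↔ (Uᴴ * A * U).IsDiag := by
  simp only [DiagBy, ← star_eq_conjTranspose, ← star_mul_mul_eq_iff_eq_mul_mul_star hU]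
  exact ⟨fun ⟨d, hd⟩ => hd ▸ isDiag_diagonal d, fun h => ⟨_, h.diagonal_diag.symm⟩⟩

section CrossMoment

variable {Ω : Type*} [MeasurableSpace Ω] (μ : Measure Ω) {ι ι' κ κ' : Type*}

noncomputable def crossMoment (z : ι → Ω → ℂ) (w : ι' → Ω → ℂ) : Matrix ι ι' ℂ :=
  Matrix.of fun i j => ∫ ω, z i ω * conj (w j ω) ∂μ

theorem crossMoment_ofReal (z : ι → Ω → ℝ) (w : ι' → Ω → ℝ) :
    crossMoment μ (fun i ω => (z i ω : ℂ)) (fun j ω => (w j ω : ℂ)) =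
      Matrix.of fun i j => ((∫ ω, z i ω * w j ω ∂μ : ℝ) : ℂ) := by
  ext i j
  simp only [crossMoment, of_apply, Complex.conj_ofReal, ← Complex.ofReal_mul,
    integral_complex_ofReal]

variable [Fintype ι] [Fintype ι']

theorem mulVec_mul_conj_mulVec (A : Matrix κ ι ℂ) (B : Matrix κ' ι' ℂ) (v : ι → ℂ)
    (u : ι' → ℂ) (k : κ) (l : κ') :
    (A *ᵥ v) k * conj ((B *ᵥ u) l) =
      ∑ i, ∑ j, A k i * conj (B l j) * (v i * conj (u j)) := by
  simp only [mulVec, dotProduct, map_sum, map_mul, Finset.sum_mul_sum]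
  exact Finset.sum_congr rfl fun i _ => Finset.sum_congr rfl fun j _ => by ring

variable {μ} {z : ι → Ω → ℂ} {w : ι' → Ω → ℂ}

theorem integrable_mulVec_mul_conj_mulVec
    (hzw : ∀ i j, Integrable (fun ω => z i ω * conj (w j ω)) μ)
    (A : Matrix κ ι ℂ) (B : Matrix κ' ι' ℂ) (k : κ) (l : κ') :
    Integrable (fun ω => (A *ᵥ (z · ω)) k * conj ((B *ᵥ (w · ω)) l)) μ := by
  simp only [mulVec_mul_conj_mulVec]
  exact integrable_finsetSum _ fun i _ => integrable_finsetSum _ fun j _ =>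
    (hzw i j).const_mul _

theorem crossMoment_mulVec (hzw : ∀ i j, Integrable (fun ω => z i ω * conj (w j ω)) μ)
    (A : Matrix κ ι ℂ) (B : Matrix κ' ι' ℂ) :
    crossMoment μ (fun k ω => (A *ᵥ (z · ω)) k) (fun l ω => (B *ᵥ (w · ω)) l) =
      A * crossMoment μ z w * Bᴴ := by
  ext k l
  simp only [crossMoment, of_apply, mulVec_mul_conj_mulVec]
  have hterm (i j) : Integrable (fun ω => A k i * conj (B l j) * (z i ω * conj (w j ω))) μ :=
    (hzw i j).const_mul _
  rw [integral_finsetSum _ fun i _ => integrable_finsetSum _ fun j _ => hterm i j]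
  simp only [integral_finsetSum _ fun j _ => hterm _ j, integral_const_mul,
    mul_apply, of_apply, conjTranspose_apply, Finset.sum_mul, RCLike.star_def]
  rw [Finset.sum_comm]
  exact Finset.sum_congr rfl fun i _ => Finset.sum_congr rfl fun j _ => by ring

end CrossMoment

section Transform2D

variable {Ω : Type*} {ι₁ ι₂ κ₁ κ₂ : Type*} [Fintype ι₁] [Fintype ι₂]

def transform2D (A : Matrix κ₁ ι₁ ℂ) (B : Matrix κ₂ ι₂ ℂ) (X : ι₁ → ι₂ → Ω → ℂ) :
    κ₁ → κ₂ → Ω → ℂ :=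
  fun k₁ k₂ ω => ∑ i₁, ∑ i₂, X i₁ i₂ ω * A k₁ i₁ * B k₂ i₂

theorem transform2D_eq_mulVec_mulVec (A : Matrix κ₁ ι₁ ℂ) (B : Matrix κ₂ ι₂ ℂ)
    (X : ι₁ → ι₂ → Ω → ℂ) (k₁ : κ₁) :
    transform2D A B X k₁ = fun k₂ ω => (B *ᵥ fun i₂ => (A *ᵥ (X · i₂ ω)) k₁) k₂ := by
  ext k₂ ω
  simp only [transform2D, mulVec, dotProduct, Finset.mul_sum]
  rw [Finset.sum_comm]
  exact Finset.sum_congr rfl fun i₂ _ => Finset.sum_congr rfl fun i₁ _ => by ring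

variable [MeasurableSpace Ω] {μ : Measure Ω}

theorem crossMoment_transform2D {X : ι₁ → ι₂ → Ω → ℂ}
    (hX : ∀ i₁ i₂ j₁ j₂, Integrable (fun ω => X i₁ i₂ ω * conj (X j₁ j₂ ω)) μ)
    (A : Matrix κ₁ ι₁ ℂ) (B : Matrix κ₂ ι₂ ℂ) (k₁ l₁ : κ₁) :
    crossMoment μ (transform2D A B X k₁) (transform2D A B X l₁) =
      B * Matrix.of (fun i₂ j₂ => (A * crossMoment μ (X · i₂) (X · j₂) * Aᴴ) k₁ l₁) * Bᴴ := by
  rw [transform2D_eq_mulVec_mulVec, transform2D_eq_mulVec_mulVec]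
  rw [crossMoment_mulVec fun i₂ j₂ =>
    integrable_mulVec_mul_conj_mulVec (hX · i₂ · j₂) A A k₁ l₁]
  congr 2
  ext i₂ j₂
  rw [of_apply, ← crossMoment_mulVec (hX · i₂ · j₂)]
  rfl

end Transform2D

theorem directional_simdiag_iff_spectral_uncorrelated_general (N1 N2 : ℕ)
    {Ω : Type*} [MeasurableSpace Ω] (μ : Measure Ω)
    (U1 : Matrix (Fin N1) (Fin N1) ℂ) (U2 : Matrix (Fin N2) (Fin N2) ℂ)
    (hU1 : U1 ∈ Matrix.unitaryGroup (Fin N1) ℂ)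
    (hU2 : U2 ∈ Matrix.unitaryGroup (Fin N2) ℂ)
    (x : Fin N1 → Fin N2 → Ω → ℝ)
    (hint : ∀ i1 i2 j1 j2, Integrable (fun ω => x i1 i2 ω * x j1 j2 ω) μ) :
    let xhat : Fin N1 → Fin N2 → Ω → ℂ :=
      fun k1 k2 ω => ∑ i1, ∑ i2,
        (x i1 i2 ω : ℂ) * (starRingEnd ℂ) (U1 i1 k1) * (starRingEnd ℂ) (U2 i2 k2)
    (∀ i2 j2, DiagBy U1 (Matrix.of fun i1 j1 =>
        ((∫ ω, x i1 i2 ω * x j1 j2 ω ∂μ : ℝ) : ℂ)))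
      ↔ (∀ (k1 l1 : Fin N1) (k2 l2 : Fin N2), k1 ≠ l1 →
          (∫ ω, xhat k1 k2 ω * (starRingEnd ℂ) (xhat l1 l2 ω) ∂μ) = 0) := by
  intro xhat
  let X : Fin N1 → Fin N2 → Ω → ℂ := fun i1 i2 ω => x i1 i2 ω
  have hxhat : xhat = transform2D U1ᴴ U2ᴴ X := rfl
  have hX : ∀ i1 i2 j1 j2, Integrable (fun ω => X i1 i2 ω * conj (X j1 j2 ω)) μ :=
    fun i1 i2 j1 j2 => by simpa [X] using (hint i1 i2 j1 j2).ofReal (𝕜 := ℂ)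
  let M (k1 l1 : Fin N1) : Matrix (Fin N2) (Fin N2) ℂ :=
    Matrix.of fun i2 j2 => (U1ᴴ * crossMoment μ (X · i2) (X · j2) * U1) k1 l1
  have hmom (k1 l1 : Fin N1) : crossMoment μ (xhat k1) (xhat l1) = U2ᴴ * M k1 l1 * U2 := by
    rw [hxhat]
    simpa using crossMoment_transform2D hX U1ᴴ U2ᴴ k1 l1 (μ := μ)
  simp only [← crossMoment_ofReal, diagBy_iff_isDiag hU1]
  constructor
  · intro h k1 l1 k2 l2 hne
    have hM : M k1 l1 = 0 := by
      ext i2 j2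
      exact h i2 j2 hne
    change crossMoment μ (xhat k1) (xhat l1) k2 l2 = 0
    simp [hmom, hM]
  · intro h i2 j2 k1 l1 hne
    have hM : crossMoment μ (xhat k1) (xhat l1) = 0 := by
      ext k2 l2
      exact h k1 l1 k2 l2 hne
    rw [hmom, conjTranspose_mul_mul_eq_zero_iff hU2] at hM
    exact congr_fun₂ hM i2 j2

/-- Theorem 3(A) of the paper: for a zero-mean random 2-D graph signal `x` on
`G1 □ G2`, all column-pair covariance matrices `Cov(x(·,i2), x(·,j2))` are
simultaneously diagonalizable with `L1` (i.e. diagonalized by `U1`) iff the 2-D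
spectral components at different `G1`-frequencies are uncorrelated:
`Cov(x̂(k1,k2), x̂(l1,l2)) = 0` whenever `k1 ≠ l1`. -/
theorem directional_simdiag_iff_spectral_uncorrelated (N1 N2 : ℕ)
    {Ω : Type*} [MeasurableSpace Ω] (μ : Measure Ω) [IsProbabilityMeasure μ]
    (U1 : Matrix (Fin N1) (Fin N1) ℂ) (U2 : Matrix (Fin N2) (Fin N2) ℂ)
    (hU1 : U1 ∈ Matrix.unitaryGroup (Fin N1) ℂ)
    (hU2 : U2 ∈ Matrix.unitaryGroup (Fin N2) ℂ)
    (x : Fin N1 → Fin N2 → Ω → ℝ)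
    (hmeas : ∀ i1 i2, Measurable (x i1 i2))
    (hzero : ∀ i1 i2, ∫ ω, x i1 i2 ω ∂μ = 0)
    (hint : ∀ i1 i2 j1 j2, Integrable (fun ω => x i1 i2 ω * x j1 j2 ω) μ) :
    let xhat : Fin N1 → Fin N2 → Ω → ℂ :=
      fun k1 k2 ω => ∑ i1, ∑ i2,
        (x i1 i2 ω : ℂ) * (starRingEnd ℂ) (U1 i1 k1) * (starRingEnd ℂ) (U2 i2 k2)
    (∀ i2 j2, DiagBy U1 (Matrix.of fun i1 j1 =>
        ((∫ ω, x i1 i2 ω * x j1 j2 ω ∂μ : ℝ) : ℂ)))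
      ↔ (∀ (k1 l1 : Fin N1) (k2 l2 : Fin N2), k1 ≠ l1 →
          (∫ ω, xhat k1 k2 ω * (starRingEnd ℂ) (xhat l1 l2 ω) ∂μ) = 0) :=
  directional_simdiag_iff_spectral_uncorrelated_general N1 N2 μ U1 U2 hU1 hU2 x hint
end
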